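/- arXiv:2408.13941 — 4 statements merged into one kernel-verified Lean document; each statement's English description precedes it below -/
import Mathlib

section
/- Let r and n be positive integers and let O be any positive-dominant total order on C(r,n). For every f ∈ N_0^{r,n}, the sequence λ(f) = (λ_1,…,λ_n) defined by λ_i = f_{π(i)} − #{j ∈ Des_O(γ_O(f)) : j ≤ i−1} (where γ_O(f) = (π(1)^{c_1},…,π(n)^{c_n})) is a partition, i.e. 0 ≤ λ_1 ≤ λ_2 ≤ … ≤ λ_n. -/
open scoped Classical

abbrev CI : Type := ℕ × ℕ

/-- Membership in the set `C(r,n)` of colored integers. -/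
def memC (r n : ℕ) (x : CI) : Prop :=
  x.1 ≤ n ∧ x.2 < r ∧ (x.1 = 0 → x.2 = 0)

/-- A positive-dominant (strict) total order on the colored integers `C(r,n)`. -/
structure PDOrder (r n : ℕ) where
  lt : CI → CI → Prop
  irrefl : ∀ x, memC r n x → ¬lt x x
  trans : ∀ x y z, memC r n x → memC r n y → memC r n z → lt x y → lt y z → lt x z
  trichotomy : ∀ x y, memC r n x → memC r n y → x = y ∨ lt x y ∨ lt y x
  nat_mono : ∀ i j : ℕ, i ≤ n → j ≤ n → i < j → lt (i, 0) (j, 0)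
  pos_dom : ∀ i j c : ℕ, i ≤ n → 1 ≤ j → j ≤ n → 1 ≤ c → c < r → lt (j, c) (i, 0)

/-- A colored permutation in `G(r,n) = Z_r ≀ S_n`. -/
structure ColoredPerm (r n : ℕ) where
  perm : Equiv.Perm (Fin n)
  color : Fin n → Fin r

/-- The colored entry `π(i)^{c_i}` (values are taken in `[1,n]`). -/
def cval {r n : ℕ} (γ : ColoredPerm r n) (i : Fin n) : CI :=
  ((γ.perm i : ℕ) + 1, (γ.color i : ℕ))

/-- Entry `γ(j)` for `j ∈ {0,…,n}`, with the convention `γ(0) = 0`. -/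
def centry {r n : ℕ} (γ : ColoredPerm r n) (j : ℕ) : CI :=
  if h : 1 ≤ j ∧ j ≤ n then cval γ ⟨j - 1, by omega⟩ else (0, 0)

/-- Descent set `Des(γ) ⊆ {0,…,n-1}` with respect to the relation `lt`. -/
noncomputable def DesSet {r n : ℕ} (lt : CI → CI → Prop) (γ : ColoredPerm r n) : Finset ℕ :=
  (Finset.range n).filter fun j => lt (centry γ (j + 1)) (centry γ j)

noncomputable def desStat {r n : ℕ} (lt : CI → CI → Prop) (γ : ColoredPerm r n) : ℕ :=
  (DesSet lt γ).card

noncomputable def majStat {r n : ℕ} (lt : CI → CI → Prop) (γ : ColoredPerm r n) : ℕ :=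
  ∑ j ∈ DesSet lt γ, j

noncomputable def invStat {r n : ℕ} (lt : CI → CI → Prop) (γ : ColoredPerm r n) : ℕ :=
  ((Finset.univ : Finset (Fin n × Fin n)).filter fun p =>
    p.1 < p.2 ∧ lt (cval γ p.2) (cval γ p.1)).card

noncomputable def lenStat {r n : ℕ} (lt : CI → CI → Prop) (γ : ColoredPerm r n) : ℕ :=
  invStat lt γ +
    ∑ i ∈ Finset.univ.filter (fun i => 0 < (γ.color i : ℕ)),
      ((γ.perm i : ℕ) + 1 + (γ.color i : ℕ) - 1)

def colStat {r n : ℕ} (γ : ColoredPerm r n) : ℕ := ∑ i, (γ.color i : ℕ)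

/-- The inverse colored permutation `γ⁻¹`. -/
def cinv {r n : ℕ} (γ : ColoredPerm r n) : ColoredPerm r n :=
  ⟨γ.perm⁻¹, fun i => γ.color (γ.perm⁻¹ i)⟩

/-- An element of `N_0^{r,n}`: a sequence of colored nonnegative integers. -/
structure ColoredSeq (r n : ℕ) where
  val : Fin n → ℕ
  col : Fin n → ℕ
  col_lt : ∀ i, col i < r
  zero_col : ∀ i, val i = 0 → col i = 0

/-- `γ` is the colored permutation `γ_O(f)` obtained by sorting the colored positions
`i^{cf_i}` by increasing value `f_i`, ties broken by increasing `lt`-order. -/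
def isSorted {r n : ℕ} (lt : CI → CI → Prop) (f : ColoredSeq r n) (γ : ColoredPerm r n) : Prop :=
  (∀ i, (γ.color i : ℕ) = f.col (γ.perm i)) ∧
    ∀ i j : Fin n, i < j →
      f.val (γ.perm i) < f.val (γ.perm j) ∨
        (f.val (γ.perm i) = f.val (γ.perm j) ∧ lt (cval γ i) (cval γ j))

def maxf {r n : ℕ} (f : ColoredSeq r n) : ℕ := Finset.univ.sup f.val
def sumf {r n : ℕ} (f : ColoredSeq r n) : ℕ := ∑ i, f.val i
def colf {r n : ℕ} (f : ColoredSeq r n) : ℕ := ∑ i, f.col i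

-- Statement 0
theorem stmt0 (r n : ℕ) (hr : 0 < r) (hn : 0 < n) (O : PDOrder r n)
    (f : ColoredSeq r n) (γ : ColoredPerm r n) (hγ : isSorted O.lt f γ)
    (lamZ : Fin n → ℤ)
    (hlam : ∀ i : Fin n, lamZ i =
      (f.val (γ.perm i) : ℤ) - ((DesSet O.lt γ).filter fun j => j ≤ (i : ℕ)).card) :
    (∀ i, 0 ≤ lamZ i) ∧ Monotone lamZ := by
  classical
  set s : Finset ℕ := DesSet O.lt γ with hs
  -- basic facts about the order
  have asym : ∀ x y, memC r n x → memC r n y → O.lt x y → O.lt y x → False :=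
    fun x y hx hy h1 h2 => O.irrefl x hx (O.trans x y x hx hy hx h1 h2)
  have memcval : ∀ i : Fin n, memC r n (cval γ i) := by
    intro i
    refine ⟨Nat.succ_le_of_lt (γ.perm i).isLt, (γ.color i).isLt, ?_⟩
    intro h; simp [cval] at h
  have memzero : memC r n ((0, 0) : CI) := ⟨Nat.zero_le n, hr, fun _ => rfl⟩
  -- centry computations
  have hcentry : ∀ i : ℕ, ∀ hi : i < n, centry γ (i + 1) = cval γ ⟨i, hi⟩ := by
    intro i hi
    unfold centry
    rw [dif_pos ⟨by omega, by omega⟩]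
    congr 1
  have hcentry0 : centry γ 0 = (0, 0) := by
    unfold centry
    rw [dif_neg (by omega)]
  have mem_s : ∀ j, j ∈ s ↔ j < n ∧ O.lt (centry γ (j + 1)) (centry γ j) := by
    intro j; simp [hs, DesSet, Finset.mem_filter, Finset.mem_range]
  -- value strictly increases across an internal descent
  have hdes : ∀ i : ℕ, ∀ hi : i + 1 < n, (i + 1) ∈ s →
      f.val (γ.perm ⟨i, by omega⟩) < f.val (γ.perm ⟨i + 1, hi⟩) := by
    intro i hi hmem
    have h := (mem_s (i + 1)).mp hmem
    rw [hcentry (i + 1) hi, hcentry i (by omega)] at h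
    rcases hγ.2 ⟨i, by omega⟩ ⟨i + 1, hi⟩ (by simp) with h1 | ⟨_, h2⟩
    · exact h1
    · exact absurd h2 (fun h2 => asym _ _ (memcval _) (memcval _) h2 h.2)
  -- non-descent gives weak increase
  have hnondes : ∀ i : ℕ, ∀ hi : i + 1 < n,
      f.val (γ.perm ⟨i, by omega⟩) ≤ f.val (γ.perm ⟨i + 1, hi⟩) := by
    intro i hi
    rcases hγ.2 ⟨i, by omega⟩ ⟨i + 1, hi⟩ (by simp) with h1 | ⟨h2, _⟩
    · omega
    · omega
  -- descent at 0 forces positive value at position 0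
  have hbase : (0 : ℕ) ∈ s → 1 ≤ f.val (γ.perm ⟨0, hn⟩) := by
    intro hmem
    have h := (mem_s 0).mp hmem
    rw [hcentry 0 hn, hcentry0] at h
    by_contra hcon
    have hv : f.val (γ.perm ⟨0, hn⟩) = 0 := by omega
    have hc : (γ.color ⟨0, hn⟩ : ℕ) = 0 := by
      rw [hγ.1 ⟨0, hn⟩]; exact f.zero_col _ hv
    have hcv : cval γ ⟨0, hn⟩ = ((γ.perm ⟨0, hn⟩ : ℕ) + 1, 0) := by
      simp [cval, hc]
    have hlt : O.lt ((0 : ℕ), (0 : ℕ)) (((γ.perm ⟨0, hn⟩ : ℕ) + 1), 0) :=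
      O.nat_mono 0 _ (Nat.zero_le n) (Nat.succ_le_of_lt (γ.perm ⟨0, hn⟩).isLt) (by omega)
    rw [hcv] at h
    exact asym _ _ memzero ⟨Nat.succ_le_of_lt (γ.perm ⟨0, hn⟩).isLt, hr, by omega⟩ hlt h.2
  -- cardinality recursion
  have card_succ : ∀ i : ℕ,
      (s.filter fun j => j ≤ i + 1).card
        = (s.filter fun j => j ≤ i).card + (if i + 1 ∈ s then 1 else 0) := by
    intro i
    have hset : (s.filter fun j => j ≤ i + 1)
        = (s.filter fun j => j ≤ i) ∪ s.filter (fun j => j = i + 1) := by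
      ext x
      simp only [Finset.mem_filter, Finset.mem_union]
      constructor
      · rintro ⟨hx, hle⟩
        rcases Nat.lt_or_ge x (i + 1) with h | h
        · exact Or.inl ⟨hx, by omega⟩
        · exact Or.inr ⟨hx, by omega⟩
      · rintro (⟨hx, hle⟩ | ⟨hx, heq⟩) <;> exact ⟨by assumption, by omega⟩
    rw [hset, Finset.card_union_of_disjoint]
    · congr 1
      rw [Finset.filter_eq']
      split <;> simp
    · rw [Finset.disjoint_left]
      intro x hx hx'
      simp only [Finset.mem_filter] at hx hx'
      omega
  have card_zero : (s.filter fun j => j ≤ 0).card = (if (0 : ℕ) ∈ s then 1 else 0) := by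
    have : (s.filter fun j => j ≤ 0) = s.filter (fun j => j = 0) := by
      apply Finset.filter_congr; intro x _; simp [Nat.le_zero]
    rw [this, Finset.filter_eq']
    split <;> simp
  -- base value nonneg
  have base : 0 ≤ lamZ ⟨0, hn⟩ := by
    rw [hlam]
    have : ((⟨0, hn⟩ : Fin n) : ℕ) = 0 := rfl
    rw [this, card_zero]
    split
    · have := hbase (by assumption)
      push_cast; omega
    · push_cast; omega
  -- consecutive step
  have step : ∀ i : ℕ, ∀ hi : i + 1 < n, lamZ ⟨i, by omega⟩ ≤ lamZ ⟨i + 1, hi⟩ := by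
    intro i hi
    rw [hlam ⟨i, by omega⟩, hlam ⟨i + 1, hi⟩]
    have h1 : ((⟨i, by omega⟩ : Fin n) : ℕ) = i := rfl
    have h2 : ((⟨i + 1, hi⟩ : Fin n) : ℕ) = i + 1 := rfl
    rw [h1, h2, card_succ i]
    by_cases hmem : (i + 1) ∈ s
    · have := hdes i hi hmem
      rw [if_pos hmem]
      push_cast; omega
    · have := hnondes i hi
      rw [if_neg hmem]
      push_cast; omega
  -- monotonicity
  have key : ∀ b : ℕ, ∀ hb : b < n, ∀ a : Fin n, (a : ℕ) ≤ b → lamZ a ≤ lamZ ⟨b, hb⟩ := by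
    intro b
    induction b with
    | zero =>
      intro hb a ha
      have : a = ⟨0, hb⟩ := Fin.ext (Nat.le_zero.mp ha)
      rw [this]
    | succ b ih =>
      intro hb a ha
      rcases Nat.lt_succ_iff_lt_or_eq.mp (Nat.lt_succ_of_le ha) with h | h
      · exact (ih (by omega) a (by omega)).trans (step b hb)
      · exact le_of_eq (congrArg lamZ (Fin.ext h))
  have mono : Monotone lamZ := by
    intro a b hab
    have := key (b : ℕ) b.isLt a hab
    simpa using this
  refine ⟨?_, mono⟩
  intro i
  have := key (i : ℕ) i.isLt ⟨0, hn⟩ (Nat.zero_le _)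
  have h0 : lamZ ⟨(i : ℕ), i.isLt⟩ = lamZ i := by congr
  exact base.trans (h0 ▸ this)
end

section
/- Let r and n be positive integers and let O be any positive-dominant total order on C(r,n). The map Φ(f) = (γ_O(f), λ(f)) is a bijection from N_0^{r,n} onto G(r,n) × P_n, and for every f ∈ N_0^{r,n} it satisfies: (i) max(f) = max(λ(f)) + des_O(γ_O(f)); (ii) |f| = |λ(f)| + n·des_O(γ_O(f)) − maj_O(γ_O(f)), where |λ| = λ_1 + … + λ_n and max(λ) = λ_n. -/
open scoped Classical

/-!
Sorting the positions of `f` by value, ties broken by `O`, gives `γ = γ_O(f)`, and along `γ` the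
values `0 = f(γ(0)) ≤ f(γ(1)) ≤ … ≤ f(γ(n))` strictly increase across every descent: a run of equal
values increases for `O`, and an entry of value `0` has color `0`, hence lies above `γ(0) = 0`. So
subtracting from `f(γ(i))` the number of descents before `i` leaves a partition `λ`. Conversely,
adding these counts to a partition gives a sequence sorted by `γ`: a run of equal values then
contains no descent, and a descent-free stretch of `γ` increases for `O`; an entry of positive color
lies below `0` by positive dominance, so a descent precedes it and its value is positive.
Statistics (i) and (ii) follow since the descent `j` is counted by the `n - j` positions after it.
-/

open Finset

section
variable {r n : ℕ}

namespace PDOrder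

theorem not_lt_of_lt (O : PDOrder r n) {x y : CI} (hx : memC r n x) (hy : memC r n y)
    (h : O.lt x y) : ¬O.lt y x :=
  fun h' => O.irrefl x hx (O.trans x y x hx hy hx h h')

theorem lt_of_not_lt (O : PDOrder r n) {x y : CI} (hx : memC r n x) (hy : memC r n y)
    (hne : x ≠ y) (h : ¬O.lt y x) : O.lt x y :=
  ((O.trichotomy x y hx hy).resolve_left hne).resolve_right h

end PDOrder

theorem memC_zero (hr : 0 < r) : memC r n (0, 0) :=
  ⟨Nat.zero_le n, hr, fun _ => rfl⟩

theorem memC_cval (γ : ColoredPerm r n) (i : Fin n) : memC r n (cval γ i) :=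
  ⟨(γ.perm i).isLt, (γ.color i).isLt, fun h => absurd h (Nat.succ_ne_zero _)⟩

theorem centry_zero (γ : ColoredPerm r n) : centry γ 0 = (0, 0) := by
  simp [centry]

theorem centry_succ (γ : ColoredPerm r n) {j : ℕ} (hj : j < n) :
    centry γ (j + 1) = cval γ ⟨j, hj⟩ := by
  rw [centry, dif_pos ⟨by omega, by omega⟩]
  rfl

theorem memC_centry (γ : ColoredPerm r n) (hr : 0 < r) {j : ℕ} (hj : j ≤ n) :
    memC r n (centry γ j) := by
  rcases j with _ | j
  · rw [centry_zero]
    exact memC_zero hr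
  · rw [centry_succ γ hj]
    exact memC_cval γ _

theorem centry_injOn (γ : ColoredPerm r n) {j k : ℕ} (hj : j ≤ n) (hk : k ≤ n)
    (h : centry γ j = centry γ k) : j = k := by
  rcases j with _ | j <;> rcases k with _ | k
  · rfl
  · simp [centry_zero, centry_succ γ hk, cval] at h
  · simp [centry_zero, centry_succ γ hj, cval] at h
  · rw [centry_succ γ hj, centry_succ γ hk] at h
    have := γ.perm.injective (Fin.ext (by simpa [cval] using congrArg Prod.fst h))
    simpa using this

theorem mem_DesSet {lt : CI → CI → Prop} {γ : ColoredPerm r n} {j : ℕ} :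
    j ∈ DesSet lt γ ↔ j < n ∧ lt (centry γ (j + 1)) (centry γ j) := by
  simp [DesSet]

theorem lt_centry_succ (O : PDOrder r n) (γ : ColoredPerm r n) (hr : 0 < r) {k : ℕ} (hk : k < n)
    (h : k ∉ DesSet O.lt γ) : O.lt (centry γ k) (centry γ (k + 1)) :=
  O.lt_of_not_lt (memC_centry γ hr hk.le) (memC_centry γ hr hk)
    (fun he => absurd (centry_injOn γ hk.le hk he) (Nat.succ_ne_self k).symm)
    (fun h' => h (mem_DesSet.2 ⟨hk, h'⟩))

theorem lt_centry_of_forall_not_mem_DesSet (O : PDOrder r n) (γ : ColoredPerm r n) {a b : ℕ}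
    (hab : a < b) (hb : b ≤ n) (h : ∀ k, a ≤ k → k < b → k ∉ DesSet O.lt γ) :
    O.lt (centry γ a) (centry γ b) := by
  have hr : 0 < r := (γ.color ⟨0, by omega⟩).pos
  induction b, hab using Nat.le_induction with
  | base => exact lt_centry_succ O γ hr (by omega) (h a le_rfl (by omega))
  | succ b hab ih =>
    exact O.trans _ _ _ (memC_centry γ hr (by omega)) (memC_centry γ hr (by omega))
      (memC_centry γ hr hb) (ih (by omega) fun k h₁ h₂ => h k h₁ (by omega))
      (lt_centry_succ O γ hr (by omega) (h b (by omega) (by omega)))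

noncomputable def desCount (lt : CI → CI → Prop) (γ : ColoredPerm r n) (i : ℕ) : ℕ :=
  ((DesSet lt γ).filter fun j => j ≤ i).card

theorem desCount_add_card_filter (lt : CI → CI → Prop) (γ : ColoredPerm r n) {i j : ℕ}
    (hij : i ≤ j) :
    desCount lt γ i + ((DesSet lt γ).filter fun k => i + 1 ≤ k ∧ k < j + 1).card =
      desCount lt γ j := by
  rw [desCount, desCount, ← card_union_of_disjoint
    (disjoint_filter.2 fun k _ h₁ h₂ => by omega), ← filter_or]
  exact congrArg card (filter_congr fun k _ => by omega)

theorem desCount_eq_desStat (lt : CI → CI → Prop) (γ : ColoredPerm r n) {i : ℕ}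
    (hi : n - 1 ≤ i) : desCount lt γ i = desStat lt γ := by
  rw [desCount, desStat, filter_true_of_mem fun j hj => by have := (mem_DesSet.1 hj).1; omega]

theorem desCount_pos_of_color_pos (O : PDOrder r n) (γ : ColoredPerm r n) (p : Fin n)
    (hc : 0 < (γ.color p : ℕ)) : 0 < desCount O.lt γ p := by
  have hr : 0 < r := (γ.color p).pos
  by_contra h0
  have hlt := lt_centry_of_forall_not_mem_DesSet O γ (Nat.succ_pos p) p.isLt
    fun k _ hk hD => h0 (card_pos.2 ⟨k, mem_filter.2 ⟨hD, by omega⟩⟩)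
  rw [centry_zero, centry_succ γ p.isLt] at hlt
  exact O.not_lt_of_lt (memC_zero hr) (memC_cval γ p) hlt
    (O.pos_dom 0 _ _ (Nat.zero_le n) (Nat.succ_pos _) (γ.perm p).isLt hc (γ.color p).isLt)

theorem sum_desCount (lt : CI → CI → Prop) (γ : ColoredPerm r n) :
    ∑ i : Fin n, (desCount lt γ i : ℤ) = n * desStat lt γ - majStat lt γ := by
  have hcount : ∀ j ∈ DesSet lt γ, ∑ i : Fin n, (if j ≤ (i : ℕ) then 1 else 0 : ℤ) = n - j := by
    intro j hj
    have hjn := (mem_DesSet.1 hj).1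
    have hIco : (range n).filter (j ≤ ·) = Ico j n := by
      ext
      simp only [mem_filter, mem_range, mem_Ico]
      omega
    rw [Fin.sum_univ_eq_sum_range (fun i => if j ≤ i then (1 : ℤ) else 0), sum_boole, hIco,
      Nat.card_Ico]
    omega
  simp only [desCount, card_filter, Nat.cast_sum, Nat.cast_ite, Nat.cast_one, Nat.cast_zero]
  rw [sum_comm, sum_congr rfl hcount, sum_sub_distrib, sum_const, nsmul_eq_mul, desStat, majStat,
    Nat.cast_sum, mul_comm]

theorem add_card_filter_le {e : ℕ → ℕ} {D : Finset ℕ} {a b : ℕ} (hab : a ≤ b)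
    (hstep : ∀ k, a ≤ k → k < b → e k ≤ e (k + 1) ∧ (k ∈ D → e k < e (k + 1))) :
    e a + (D.filter fun k => a ≤ k ∧ k < b).card ≤ e b := by
  induction b, hab using Nat.le_induction with
  | base => simp
  | succ b hab ih =>
    have ih := ih fun k h₁ h₂ => hstep k h₁ (by omega)
    obtain ⟨hle, hlt⟩ := hstep b hab (by omega)
    have hsplit : (D.filter fun k => a ≤ k ∧ k < b + 1) =
        (D.filter fun k => a ≤ k ∧ k < b) ∪ D.filter (· = b) := by
      rw [← filter_or]
      exact filter_congr fun k _ => by omega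
    rw [hsplit, card_union_of_disjoint (disjoint_filter.2 fun k _ h₁ h₂ => by omega), filter_eq']
    split_ifs with hb
    · have := hlt hb
      simp only [card_singleton]
      omega
    · simp only [card_empty]
      omega

def valAt (f : ColoredSeq r n) (γ : ColoredPerm r n) : ℕ → ℕ
  | 0 => 0
  | k + 1 => if h : k < n then f.val (γ.perm ⟨k, h⟩) else 0

theorem isSorted.le {O : PDOrder r n} {f : ColoredSeq r n} {γ : ColoredPerm r n}
    (hs : isSorted O.lt f γ) {i j : Fin n} (hij : i ≤ j) :
    f.val (γ.perm i) ≤ f.val (γ.perm j) := by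
  rcases hij.lt_or_eq with h | rfl
  · rcases hs.2 i j h with h | ⟨h, _⟩
    exacts [h.le, h.le]
  · exact le_rfl

theorem isSorted.valAt_step {O : PDOrder r n} {f : ColoredSeq r n} {γ : ColoredPerm r n}
    (hs : isSorted O.lt f γ) {k : ℕ} (hk : k < n) :
    valAt f γ k ≤ valAt f γ (k + 1) ∧ (k ∈ DesSet O.lt γ → valAt f γ k < valAt f γ (k + 1)) := by
  have hr : 0 < r := (γ.color ⟨k, hk⟩).pos
  rcases k with _ | m
  · refine ⟨Nat.zero_le _, fun hD => Nat.pos_of_ne_zero fun h0 => ?_⟩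
    simp only [valAt, dif_pos hk] at h0
    have hc : (γ.color ⟨0, hk⟩ : ℕ) = 0 := (hs.1 _).trans (f.zero_col _ h0)
    have hdes := (mem_DesSet.1 hD).2
    rw [centry_succ γ hk, centry_zero] at hdes
    -- with color `0`, the first entry is a plain integer, hence above `0`
    have hcv : cval γ ⟨0, hk⟩ = ((γ.perm ⟨0, hk⟩ : ℕ) + 1, 0) := Prod.ext rfl hc
    have hpos := O.nat_mono 0 _ (Nat.zero_le n) (γ.perm ⟨0, hk⟩).isLt (Nat.succ_pos _)
    rw [hcv] at hdes
    exact O.not_lt_of_lt (memC_zero hr) (hcv ▸ memC_cval γ _) hpos hdes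
  · simp only [valAt, dif_pos hk, dif_pos (show m < n by omega)]
    rcases hs.2 ⟨m, by omega⟩ ⟨m + 1, hk⟩ (Fin.mk_lt_mk.2 m.lt_succ_self) with h | ⟨h, hlt⟩
    · exact ⟨h.le, fun _ => h⟩
    · refine ⟨h.le, fun hD => absurd hlt ?_⟩
      have hdes := (mem_DesSet.1 hD).2
      rw [centry_succ γ hk, centry_succ γ (by omega)] at hdes
      exact O.not_lt_of_lt (memC_cval γ _) (memC_cval γ _) hdes

theorem isSorted.desCount_le {O : PDOrder r n} {f : ColoredSeq r n} {γ : ColoredPerm r n}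
    (hs : isSorted O.lt f γ) (i : Fin n) : desCount O.lt γ i ≤ f.val (γ.perm i) := by
  have h := add_card_filter_le (e := valAt f γ) (D := DesSet O.lt γ)
    (Nat.zero_le ((i : ℕ) + 1)) fun k _ hk => hs.valAt_step (by omega)
  rw [filter_congr fun k _ => show 0 ≤ k ∧ k < (i : ℕ) + 1 ↔ k ≤ i by omega] at h
  simpa [valAt, i.isLt, desCount] using h

theorem isSorted.val_add_desCount_le {O : PDOrder r n} {f : ColoredSeq r n}
    {γ : ColoredPerm r n} (hs : isSorted O.lt f γ) {i j : Fin n} (hij : i ≤ j) :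
    f.val (γ.perm i) + desCount O.lt γ j ≤ f.val (γ.perm j) + desCount O.lt γ i := by
  have hij' : (i : ℕ) ≤ j := hij
  have h := add_card_filter_le (e := valAt f γ) (D := DesSet O.lt γ) (a := i + 1) (b := j + 1)
    (by omega) fun k _ hk => hs.valAt_step (by omega)
  have hc := desCount_add_card_filter O.lt γ hij'
  simp only [valAt, dif_pos i.isLt, dif_pos j.isLt, Fin.eta] at h
  omega

theorem isSorted.maxf_eq {O : PDOrder r n} {f : ColoredSeq r n} {γ : ColoredPerm r n}
    (hs : isSorted O.lt f γ) {i : Fin n} (hi : (i : ℕ) = n - 1) :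
    maxf f = f.val (γ.perm i) := by
  refine le_antisymm (Finset.sup_le fun k _ => ?_) (le_sup (mem_univ _))
  have hk := (γ.perm.symm k).isLt
  have := hs.le (show γ.perm.symm k ≤ i from Fin.le_def.2 (by omega))
  rwa [Equiv.apply_symm_apply] at this

noncomputable def seqOf (O : PDOrder r n) (γ : ColoredPerm r n) (g : Fin n → ℕ) :
    ColoredSeq r n where
  val k := g (γ.perm.symm k) + desCount O.lt γ (γ.perm.symm k)
  col k := γ.color (γ.perm.symm k)
  col_lt k := (γ.color _).isLt
  zero_col k h := by
    by_contra hc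
    have := desCount_pos_of_color_pos O γ _ (Nat.pos_of_ne_zero hc)
    omega

theorem seqOf_val_perm (O : PDOrder r n) (γ : ColoredPerm r n) (g : Fin n → ℕ) (i : Fin n) :
    (seqOf O γ g).val (γ.perm i) = g i + desCount O.lt γ i := by
  simp [seqOf]

theorem isSorted_seqOf (O : PDOrder r n) (γ : ColoredPerm r n) {g : Fin n → ℕ}
    (hg : Monotone g) : isSorted O.lt (seqOf O γ g) γ := by
  refine ⟨fun i => by simp [seqOf], fun i j hij => ?_⟩
  rw [seqOf_val_perm, seqOf_val_perm]
  have hc := desCount_add_card_filter O.lt γ (show (i : ℕ) ≤ j from hij.le)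
  have hgij := hg hij.le
  by_cases hlt : g i + desCount O.lt γ i < g j + desCount O.lt γ j
  · exact Or.inl hlt
  · have hnone := filter_eq_empty_iff.1 <| card_eq_zero.1 <|
      show ((DesSet O.lt γ).filter fun k => (i : ℕ) + 1 ≤ k ∧ k < j + 1).card = 0 by omega
    have hO := lt_centry_of_forall_not_mem_DesSet O γ (a := i + 1) (b := j + 1)
      (by simpa using hij) j.isLt fun k h₁ h₂ hk => hnone hk ⟨h₁, h₂⟩
    rw [centry_succ γ i.isLt, centry_succ γ j.isLt] at hO
    exact Or.inr ⟨by omega, hO⟩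

theorem ColoredSeq.ext {f g : ColoredSeq r n} (hv : f.val = g.val) (hc : f.col = g.col) :
    f = g := by
  cases f
  cases g
  cases hv
  cases hc
  rfl

def ColoredSeq.entry (f : ColoredSeq r n) (a : Fin n) : CI := ((a : ℕ) + 1, f.col a)

theorem ColoredSeq.memC_entry (f : ColoredSeq r n) (a : Fin n) : memC r n (f.entry a) :=
  ⟨a.isLt, f.col_lt a, fun h => absurd h (Nat.succ_ne_zero _)⟩

def sortLT (O : PDOrder r n) (f : ColoredSeq r n) (a b : Fin n) : Prop :=
  f.val a < f.val b ∨ (f.val a = f.val b ∧ O.lt (f.entry a) (f.entry b))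

def sortLE (O : PDOrder r n) (f : ColoredSeq r n) (a b : Fin n) : Prop :=
  a = b ∨ sortLT O f a b

section Sorting
variable {O : PDOrder r n} {f : ColoredSeq r n}

theorem sortLT_asymm {a b : Fin n} (h : sortLT O f a b) : ¬sortLT O f b a := by
  rcases h with h | ⟨h₁, h₂⟩ <;> rintro (h' | ⟨h₁', h₂'⟩)
  · omega
  · omega
  · omega
  · exact O.not_lt_of_lt (f.memC_entry a) (f.memC_entry b) h₂ h₂'

theorem sortLT_trans {a b c : Fin n} (h : sortLT O f a b) (h' : sortLT O f b c) :
    sortLT O f a c := by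
  rcases h with h | ⟨h₁, h₂⟩ <;> rcases h' with h' | ⟨h₁', h₂'⟩
  · exact Or.inl (h.trans h')
  · exact Or.inl (by omega)
  · exact Or.inl (by omega)
  · exact Or.inr ⟨h₁.trans h₁', O.trans _ _ _ (f.memC_entry a) (f.memC_entry b)
      (f.memC_entry c) h₂ h₂'⟩

theorem sortLT_or_sortLT {a b : Fin n} (hab : a ≠ b) : sortLT O f a b ∨ sortLT O f b a := by
  rcases lt_trichotomy (f.val a) (f.val b) with h | h | h
  · exact Or.inl (Or.inl h)
  · rcases O.trichotomy _ _ (f.memC_entry a) (f.memC_entry b) with h' | h' | h'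
    · exact absurd (Fin.ext (by simpa [ColoredSeq.entry] using congrArg Prod.fst h')) hab
    · exact Or.inl (Or.inr ⟨h, h'⟩)
    · exact Or.inr (Or.inr ⟨h.symm, h'⟩)
  · exact Or.inr (Or.inl h)

instance : IsTrans (Fin n) (sortLE O f) :=
  ⟨by
    rintro a b c (rfl | hab) (rfl | hbc)
    exacts [Or.inl rfl, Or.inr hbc, Or.inr hab, Or.inr (sortLT_trans hab hbc)]⟩

instance : Std.Antisymm (sortLE O f) :=
  ⟨by
    rintro a b (rfl | hab) (hba | hba)
    exacts [rfl, rfl, hba.symm, absurd hba (sortLT_asymm hab)]⟩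

instance : Std.Total (sortLE O f) :=
  ⟨fun a b => (eq_or_ne a b).elim (fun h => Or.inl (Or.inl h))
    fun h => (sortLT_or_sortLT h).imp Or.inr Or.inr⟩

theorem isSorted_iff {γ : ColoredPerm r n} :
    isSorted O.lt f γ ↔
      (∀ i, (γ.color i : ℕ) = f.col (γ.perm i)) ∧ (List.ofFn γ.perm).Pairwise (sortLT O f) := by
  refine and_congr_right fun hc => ?_
  have hentry : ∀ i, cval γ i = f.entry (γ.perm i) := fun i => Prod.ext rfl (hc i)
  simp only [List.pairwise_ofFn, sortLT, hentry]

theorem isSorted.unique {γ γ' : ColoredPerm r n} (hs : isSorted O.lt f γ)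
    (hs' : isSorted O.lt f γ') : γ = γ' := by
  obtain ⟨hc, hl⟩ := isSorted_iff.1 hs
  obtain ⟨hc', hl'⟩ := isSorted_iff.1 hs'
  have hp : (List.ofFn γ.perm).Perm (List.ofFn γ'.perm) :=
    (γ.perm.ofFn_comp_perm id).trans (γ'.perm.ofFn_comp_perm id).symm
  have hperm : γ.perm = γ'.perm := Equiv.ext <| congrFun <| List.ofFn_injective <|
    hp.eq_of_pairwise (fun _ _ _ _ h h' => absurd h' (sortLT_asymm h)) hl hl'
  obtain ⟨π, c⟩ := γ
  obtain ⟨π', c'⟩ := γ'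
  subst hperm
  congr
  exact funext fun i => Fin.ext ((hc i).trans (hc' i).symm)

theorem exists_isSorted (O : PDOrder r n) (f : ColoredSeq r n) :
    ∃ γ : ColoredPerm r n, isSorted O.lt f γ := by
  set l := univ.sort (sortLE O f)
  have hlen : l.length = n := by simp [l]
  let π : Equiv.Perm (Fin n) := (finCongr hlen.symm).trans
    ((sort_nodup _ _).getEquivOfForallMemList l fun a => by simp [l])
  refine ⟨⟨π, fun i => ⟨f.col (π i), f.col_lt _⟩⟩, isSorted_iff.2 ⟨fun _ => rfl, ?_⟩⟩
  have hπ : List.ofFn π = l := List.ext_get (by simp [hlen]) fun i _ _ => by simp [π]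
  rw [hπ]
  exact ((pairwise_sort _ _).and (sort_nodup _ _)).imp fun h => h.1.resolve_left h.2

end Sorting

noncomputable def sortPerm (O : PDOrder r n) (f : ColoredSeq r n) : ColoredPerm r n :=
  (exists_isSorted O f).choose

theorem isSorted_sortPerm (O : PDOrder r n) (f : ColoredSeq r n) :
    isSorted O.lt f (sortPerm O f) :=
  (exists_isSorted O f).choose_spec

noncomputable def sortPartition (O : PDOrder r n) (f : ColoredSeq r n) (i : Fin n) : ℕ :=
  f.val ((sortPerm O f).perm i) - desCount O.lt (sortPerm O f) i

theorem val_sortPerm (O : PDOrder r n) (f : ColoredSeq r n) (i : Fin n) :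
    f.val ((sortPerm O f).perm i) = sortPartition O f i + desCount O.lt (sortPerm O f) i :=
  (Nat.sub_add_cancel ((isSorted_sortPerm O f).desCount_le i)).symm

theorem monotone_sortPartition (O : PDOrder r n) (f : ColoredSeq r n) :
    Monotone (sortPartition O f) := fun i j hij => by
  have := (isSorted_sortPerm O f).val_add_desCount_le hij
  have := val_sortPerm O f i
  have := val_sortPerm O f j
  omega

noncomputable def sortEquiv (O : PDOrder r n) :
    ColoredSeq r n ≃ ColoredPerm r n × { g : Fin n → ℕ // Monotone g } where
  toFun f := (sortPerm O f, ⟨sortPartition O f, monotone_sortPartition O f⟩)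
  invFun x := seqOf O x.1 x.2.1
  left_inv f := by
    refine ColoredSeq.ext (funext fun k => ?_) (funext fun k => ?_)
    · simp only [seqOf]
      rw [← val_sortPerm, Equiv.apply_symm_apply]
    · simp only [seqOf]
      rw [(isSorted_sortPerm O f).1, Equiv.apply_symm_apply]
  right_inv := by
    rintro ⟨γ, g, hg⟩
    have hγ : sortPerm O (seqOf O γ g) = γ :=
      (isSorted_sortPerm O _).unique (isSorted_seqOf O γ hg)
    refine Prod.ext hγ (Subtype.ext (funext fun i => ?_))
    simp only [sortPartition, hγ, seqOf_val_perm, Nat.add_sub_cancel]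

end

theorem stmt1 (r n : ℕ) (hn : 0 < n) (O : PDOrder r n) :
    ∃ Φ : ColoredSeq r n → ColoredPerm r n × { g : Fin n → ℕ // Monotone g },
      Function.Bijective Φ ∧
      ∀ f : ColoredSeq r n,
        isSorted O.lt f (Φ f).1 ∧
        (∀ i : Fin n, ((Φ f).2.1 i : ℤ) =
          (f.val ((Φ f).1.perm i) : ℤ) -
            ((DesSet O.lt (Φ f).1).filter fun j => j ≤ (i : ℕ)).card) ∧
        maxf f = (Φ f).2.1 ⟨n - 1, by omega⟩ + desStat O.lt (Φ f).1 ∧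
        (sumf f : ℤ) = (∑ i, ((Φ f).2.1 i : ℤ)) + n * desStat O.lt (Φ f).1
          - majStat O.lt (Φ f).1 := by
  refine ⟨sortEquiv O, (sortEquiv O).bijective, fun f => ?_⟩
  have hs := isSorted_sortPerm O f
  have hval := val_sortPerm O f
  refine ⟨hs, fun i => ?_, ?_, ?_⟩
  · have := hval i
    change (sortPartition O f i : ℤ) =
      (f.val ((sortPerm O f).perm i) : ℤ) - (desCount O.lt (sortPerm O f) i : ℤ)
    omega
  · change maxf f = sortPartition O f _ + desStat O.lt (sortPerm O f)
    rw [hs.maxf_eq (i := ⟨n - 1, by omega⟩) rfl, hval, desCount_eq_desStat _ _ le_rfl]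
  · change (sumf f : ℤ) = ∑ i, (sortPartition O f i : ℤ) + n * desStat O.lt (sortPerm O f)
      - majStat O.lt (sortPerm O f)
    rw [sumf, ← Equiv.sum_comp (sortPerm O f).perm, add_sub_assoc, ← sum_desCount, Nat.cast_sum]
    simp only [hval, Nat.cast_add, sum_add_distrib]
end

section
/- Let r and n be positive integers, let O and P be two positive-dominant total orders on C(r,n), and let n̄ = (n_0, n_1, …, n_k) be a composition of n. Then there exists a bijection Ψ from N_0^{r,n}(n̄) onto itself such that for every f ∈ N_0^{r,n}(n̄), inv_P(f) = inv_O(Ψ(f)) and col(f) = col(Ψ(f)). -/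
open scoped Classical

def NSet (r n k : ℕ) (nv : ℕ → ℕ) : Set (ColoredSeq r n) :=
  {f | ∀ j ≤ k, (Finset.univ.filter fun i => f.val i = j).card = nv j}

/-!
Because `γ_O(f)` is sorted by value, its inversions are exactly the pairs of positions `p, q`
with `f_p < f_q` whose colored symbols are `O`-inverted (equal values never form an inversion),
and the color part of its length only depends on the colors of `f`. By positive dominance, `O` and
`P` order every pair of positions in the same way unless both are colored. So let `τ` fix the
uncolored positions and carry the `O`-order of the colored ones onto their `P`-order; `Ψ` moves
the values of `f` along `τ` and keeps the colors, which matches the two inversion counts and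
preserves the value multiplicities.
-/

theorem nonempty_relIso_of_isStrictTotalOrder {α : Type*} [Finite α] (r s : α → α → Prop)
    [IsStrictTotalOrder α r] [IsStrictTotalOrder α s] : Nonempty (r ≃r s) := by
  have : Fintype α := Fintype.ofFinite α
  have : IsWellOrder α r := { wf := Finite.wellFounded_of_trans_of_irrefl r }
  have : IsWellOrder α s := { wf := Finite.wellFounded_of_trans_of_irrefl s }
  exact Ordinal.type_eq.1 (by rw [Ordinal.type_fintype, Ordinal.type_fintype])

variable {r n : ℕ}

/-- The colored integer `(p + 1)^{c p}`: position `p : Fin n` stands for the integer `p + 1`. -/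
def colPos (c : Fin n → ℕ) (p : Fin n) : CI := ((p : ℕ) + 1, c p)

lemma memC_colPos {c : Fin n → ℕ} (hc : ∀ i, c i < r) (p : Fin n) : memC r n (colPos c p) :=
  ⟨p.isLt, hc p, by simp [colPos]⟩

lemma colPos_injective (c : Fin n → ℕ) : Function.Injective (colPos c) :=
  fun _ _ h => Fin.ext (by simpa [colPos] using congrArg Prod.fst h)

namespace PDOrder

variable (O : PDOrder r n)

lemma asymm {x y : CI} (hx : memC r n x) (hy : memC r n y) (h : O.lt x y) : ¬O.lt y x :=
  fun h' => O.irrefl x hx (O.trans x y x hx hy hx h h')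

lemma lt_uncolored_iff (hr : 0 < r) {i j : ℕ} (hi : i ≤ n) (hj : j ≤ n) :
    O.lt (i, 0) (j, 0) ↔ i < j := by
  refine ⟨fun h => ?_, O.nat_mono i j hi hj⟩
  have hmem : ∀ k ≤ n, memC r n (k, 0) := fun k hk => ⟨hk, hr, fun _ => rfl⟩
  rcases lt_trichotomy i j with hij | rfl | hji
  · exact hij
  · exact absurd h (O.irrefl _ (hmem i hi))
  · exact absurd h (O.asymm (hmem j hj) (hmem i hi) (O.nat_mono j i hj hi hji))

/-- Outside the colored-versus-colored case, the order on positions does not depend on `O`. -/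
lemma colPos_lt_iff {c : Fin n → ℕ} (hc : ∀ i, c i < r) {x y : Fin n}
    (h : c x = 0 ∨ c y = 0) :
    O.lt (colPos c x) (colPos c y) ↔ c y = 0 ∧ (0 < c x ∨ x < y) := by
  have colored_lt (p q : Fin n) (hp : 0 < c p) (hq : c q = 0) :
      O.lt (colPos c p) (colPos c q) := by
    simpa [colPos, hq] using O.pos_dom _ _ _ q.isLt (Nat.succ_pos p) p.isLt hp (hc p)
  rcases Nat.eq_zero_or_pos (c y) with hy | hy
  · rcases Nat.eq_zero_or_pos (c x) with hx | hx
    · simp only [colPos, hx, hy, lt_self_iff_false, false_or, true_and, Fin.lt_def]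
      rw [O.lt_uncolored_iff (hx ▸ hc x) x.isLt y.isLt]
      omega
    · exact iff_of_true (colored_lt x y hx hy) ⟨hy, Or.inl hx⟩
  · have hx : c x = 0 := h.resolve_right hy.ne'
    exact iff_of_false
      (O.asymm (memC_colPos hc y) (memC_colPos hc x) (colored_lt y x hy hx)) (by omega)

def coloredLT (c : Fin n → ℕ) (a b : {p // 0 < c p}) : Prop :=
  O.lt (colPos c a) (colPos c b)

lemma isStrictTotalOrder_coloredLT {c : Fin n → ℕ} (hc : ∀ i, c i < r) :
    IsStrictTotalOrder {p // 0 < c p} (O.coloredLT c) where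
  irrefl a := O.irrefl _ (memC_colPos hc a)
  trans a b d := O.trans _ _ _ (memC_colPos hc a) (memC_colPos hc b) (memC_colPos hc d)
  trichotomous a b hab hba := Subtype.ext <| colPos_injective c <|
    (O.trichotomy _ _ (memC_colPos hc a) (memC_colPos hc b)).resolve_right (not_or.2 ⟨hab, hba⟩)

end PDOrder

noncomputable def coloredIso (O P : PDOrder r n) (c : Fin n → ℕ) (hc : ∀ i, c i < r) :
    O.coloredLT c ≃r P.coloredLT c :=
  have := O.isStrictTotalOrder_coloredLT hc
  have := P.isStrictTotalOrder_coloredLT hc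
  Classical.choice (nonempty_relIso_of_isStrictTotalOrder _ _)

noncomputable def relabel (O P : PDOrder r n) (c : Fin n → ℕ) (hc : ∀ i, c i < r) :
    Equiv.Perm (Fin n) :=
  Equiv.Perm.subtypeCongr (coloredIso O P c hc).toEquiv (Equiv.refl _)

section relabel

variable (O P : PDOrder r n) {c : Fin n → ℕ} (hc : ∀ i, c i < r)

lemma relabel_of_pos {p : Fin n} (hp : 0 < c p) :
    relabel O P c hc p = coloredIso O P c hc ⟨p, hp⟩ := by
  simp [relabel, hp]

lemma relabel_of_eq_zero {p : Fin n} (hp : c p = 0) : relabel O P c hc p = p := by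
  simp [relabel, hp]

lemma pos_relabel_iff (p : Fin n) : 0 < c (relabel O P c hc p) ↔ 0 < c p := by
  rcases Nat.eq_zero_or_pos (c p) with hp | hp
  · rw [relabel_of_eq_zero O P hc hp]
  · exact iff_of_true (relabel_of_pos O P hc hp ▸ (coloredIso O P c hc ⟨p, hp⟩).2) hp

lemma pos_relabel_symm_iff (p : Fin n) : 0 < c ((relabel O P c hc).symm p) ↔ 0 < c p := by
  simpa using (pos_relabel_iff O P hc ((relabel O P c hc).symm p)).symm

lemma relabel_lt_iff (x y : Fin n) :
    P.lt (colPos c (relabel O P c hc x)) (colPos c (relabel O P c hc y)) ↔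
      O.lt (colPos c x) (colPos c y) := by
  by_cases hxy : 0 < c x ∧ 0 < c y
  · rw [relabel_of_pos O P hc hxy.1, relabel_of_pos O P hc hxy.2]
    exact (coloredIso O P c hc).map_rel_iff
  have hzero (p : Fin n) : c (relabel O P c hc p) = 0 ↔ c p = 0 := by
    simpa only [Nat.pos_iff_ne_zero, not_iff_not] using pos_relabel_iff O P hc p
  have hxy' : c x = 0 ∨ c y = 0 := by omega
  rw [P.colPos_lt_iff hc (by rwa [hzero, hzero]), O.colPos_lt_iff hc hxy', hzero]
  rcases Nat.eq_zero_or_pos (c y) with hy | hy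
  · rcases Nat.eq_zero_or_pos (c x) with hx | hx
    · rw [relabel_of_eq_zero O P hc hx, relabel_of_eq_zero O P hc hy]
    · simp [pos_relabel_iff, hx, hy]
  · simp [hy.ne']

end relabel

attribute [ext] ColoredSeq

def ColoredSeq.permVal (f : ColoredSeq r n) (σ : Equiv.Perm (Fin n))
    (hσ : ∀ p, 0 < f.col (σ p) ↔ 0 < f.col p) : ColoredSeq r n where
  val := f.val ∘ σ
  col := f.col
  col_lt := f.col_lt
  zero_col p hp := by
    have := f.zero_col _ hp
    have := hσ p
    omega

lemma ColoredSeq.card_permVal_val_eq (f : ColoredSeq r n) (σ : Equiv.Perm (Fin n))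
    (hσ : ∀ p, 0 < f.col (σ p) ↔ 0 < f.col p) (j : ℕ) :
    (Finset.univ.filter fun i => (f.permVal σ hσ).val i = j).card =
      (Finset.univ.filter fun i => f.val i = j).card :=
  Finset.card_equiv σ fun i => by simp only [Finset.mem_filter, Finset.mem_univ, true_and]; rfl

/-- The bijection `Ψ`. -/
noncomputable def transfer (O P : PDOrder r n) : ColoredSeq r n ≃ ColoredSeq r n where
  toFun f := f.permVal (relabel O P f.col f.col_lt) (pos_relabel_iff O P f.col_lt)
  invFun f := f.permVal (relabel O P f.col f.col_lt).symm (pos_relabel_symm_iff O P f.col_lt)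
  left_inv f := by ext <;> simp [ColoredSeq.permVal]
  right_inv f := by ext <;> simp [ColoredSeq.permVal]

lemma transfer_mem_NSet_iff (O P : PDOrder r n) (k : ℕ) (nv : ℕ → ℕ) (f : ColoredSeq r n) :
    transfer O P f ∈ NSet r n k nv ↔ f ∈ NSet r n k nv := by
  simp only [NSet, Set.mem_ofPred_eq, transfer, Equiv.coe_fn_mk, ColoredSeq.card_permVal_val_eq]

noncomputable def crossInv (O : PDOrder r n) (f : ColoredSeq r n) : ℕ :=
  (Finset.univ.filter fun pq : Fin n × Fin n =>
    f.val pq.1 < f.val pq.2 ∧ O.lt (colPos f.col pq.2) (colPos f.col pq.1)).card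

def colorWeight (f : ColoredSeq r n) : ℕ :=
  ∑ p ∈ Finset.univ.filter (fun p => 0 < f.col p), ((p : ℕ) + 1 + f.col p - 1)

lemma crossInv_transfer (O P : PDOrder r n) (f : ColoredSeq r n) :
    crossInv O (transfer O P f) = crossInv P f :=
  Finset.card_equiv ((relabel O P f.col f.col_lt).prodCongr (relabel O P f.col f.col_lt))
    fun pq => by
      simp only [Finset.mem_filter, Finset.mem_univ, true_and]
      exact and_congr Iff.rfl (relabel_lt_iff O P f.col_lt pq.2 pq.1).symm

namespace isSorted

variable {lt : CI → CI → Prop} {f : ColoredSeq r n} {γ : ColoredPerm r n}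

lemma val_le (hs : isSorted lt f γ) {i j : Fin n} (hij : i ≤ j) :
    f.val (γ.perm i) ≤ f.val (γ.perm j) := by
  rcases hij.lt_or_eq with hij | rfl
  · rcases hs.2 i j hij with h | h
    exacts [h.le, h.1.le]
  · exact le_rfl

lemma lt_of_val_lt (hs : isSorted lt f γ) {i j : Fin n}
    (h : f.val (γ.perm i) < f.val (γ.perm j)) : i < j :=
  lt_of_not_ge fun hji => (hs.val_le hji).not_gt h

lemma cval_eq (hs : isSorted lt f γ) (i : Fin n) : cval γ i = colPos f.col (γ.perm i) := by
  simp [cval, colPos, hs.1 i]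

end isSorted

lemma invStat_eq_crossInv {O : PDOrder r n} {f : ColoredSeq r n} {γ : ColoredPerm r n}
    (hs : isSorted O.lt f γ) : invStat O.lt γ = crossInv O f := by
  refine Finset.card_equiv (γ.perm.prodCongr γ.perm) fun ⟨i, j⟩ => ?_
  simp only [Finset.mem_filter, Finset.mem_univ, true_and, Equiv.prodCongr_apply, Prod.map,
    hs.cval_eq]
  constructor
  · rintro ⟨hij, hinv⟩
    refine ⟨(hs.2 i j hij).resolve_right fun h => ?_, hinv⟩
    rw [hs.cval_eq, hs.cval_eq] at h
    exact O.asymm (memC_colPos f.col_lt _) (memC_colPos f.col_lt _) h.2 hinv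
  · rintro ⟨hval, hinv⟩
    exact ⟨hs.lt_of_val_lt hval, hinv⟩

lemma lenStat_eq_of_isSorted {O : PDOrder r n} {f : ColoredSeq r n} {γ : ColoredPerm r n}
    (hs : isSorted O.lt f γ) : lenStat O.lt γ = crossInv O f + colorWeight f := by
  rw [lenStat, invStat_eq_crossInv hs, colorWeight, Finset.sum_filter, Finset.sum_filter,
    ← Equiv.sum_comp γ.perm fun p => if 0 < f.col p then (p : ℕ) + 1 + f.col p - 1 else 0]
  simp only [hs.1]

theorem stmt5_general (r n k : ℕ) (O P : PDOrder r n)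
    (nv : ℕ → ℕ)
    (gamO gamP : ColoredSeq r n → ColoredPerm r n)
    (hO : ∀ f, isSorted O.lt f (gamO f)) (hP : ∀ f, isSorted P.lt f (gamP f)) :
    ∃ Ψ : ColoredSeq r n → ColoredSeq r n,
      Set.BijOn Ψ (NSet r n k nv) (NSet r n k nv) ∧
      ∀ f ∈ NSet r n k nv,
        lenStat P.lt (gamP f) = lenStat O.lt (gamO (Ψ f)) ∧ colf f = colf (Ψ f) := by
  refine ⟨transfer O P, (transfer O P).bijOn (transfer_mem_NSet_iff O P k nv),
    fun f _ => ⟨?_, rfl⟩⟩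
  rw [lenStat_eq_of_isSorted (hP f), lenStat_eq_of_isSorted (hO _), crossInv_transfer]
  rfl

theorem stmt5 (r n k : ℕ) (hr : 0 < r) (hn : 0 < n) (O P : PDOrder r n)
    (nv : ℕ → ℕ) (hcomp : ∑ j ∈ Finset.range (k + 1), nv j = n)
    (gamO gamP : ColoredSeq r n → ColoredPerm r n)
    (hO : ∀ f, isSorted O.lt f (gamO f)) (hP : ∀ f, isSorted P.lt f (gamP f)) :
    ∃ Ψ : ColoredSeq r n → ColoredSeq r n,
      Set.BijOn Ψ (NSet r n k nv) (NSet r n k nv) ∧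
      ∀ f ∈ NSet r n k nv,
        lenStat P.lt (gamP f) = lenStat O.lt (gamO (Ψ f)) ∧ colf f = colf (Ψ f) :=
  stmt5_general r n k O P nv gamO gamP hO hP
end

section
/- Let r and n be positive integers, let Q be the Adin–Roichman order on colored nonnegative integers, and let f ∈ N_0^{r,n}. Write γ_Q(f) = (π(1)^{c_1},…,π(n)^{c_n}) and set μ = (f_{π(1)}, f_{π(2)}, …, f_{π(n)}). Then μ is γ_Q(f)-compatible with respect to Q; in particular μ ∈ P_n. -/
open scoped Classical

/-- The Adin–Roichman order on colored nonnegative integers: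
`i^c <_Q j^d` iff `c > d`, or `c = d` and `i < j`. -/
def ARlt (x y : ℕ × ℕ) : Prop := y.2 < x.2 ∨ (x.2 = y.2 ∧ x.1 < y.1)

def ARle (x y : ℕ × ℕ) : Prop := x = y ∨ ARlt x y

/-- `nthEntry n g j` is `g_j` for `j ∈ [1,n]` (1-based), with the convention `g_0 = 0`. -/
def nthEntry (n : ℕ) (g : Fin n → ℕ) (j : ℕ) : ℕ :=
  if h : 1 ≤ j ∧ j ≤ n then g ⟨j - 1, by omega⟩ else 0

/-- The defining condition of the set `B(r,n)` of colored bipartite partitions. -/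
def memB {r n : ℕ} (g : Fin n → ℕ) (f : ColoredSeq r n) : Prop :=
  Monotone g ∧
  ∀ (i : ℕ) (h : i + 1 < n),
    g ⟨i, by omega⟩ < g ⟨i + 1, h⟩ ∨
      (g ⟨i, by omega⟩ = g ⟨i + 1, h⟩ ∧
        ARle (f.val ⟨i, by omega⟩, f.col ⟨i, by omega⟩)
          (f.val ⟨i + 1, h⟩, f.col ⟨i + 1, h⟩))


-- Statement 7
theorem stmt7 (r n : ℕ) (hr : 0 < r) (hn : 0 < n)
    (f : ColoredSeq r n) (γ : ColoredPerm r n) (hγ : isSorted ARlt f γ) :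
    (∀ j ∈ DesSet ARlt γ,
      nthEntry n (fun i => f.val (γ.perm i)) j < nthEntry n (fun i => f.val (γ.perm i)) (j + 1)) ∧
    Monotone fun i : Fin n => f.val (γ.perm i) := by
  have hmono : Monotone fun i : Fin n => f.val (γ.perm i) := by
    intro i j hij
    rcases lt_or_eq_of_le hij with h | h
    · rcases hγ.2 i j h with h' | h'
      · exact le_of_lt h'
      · exact le_of_eq h'.1
    · rw [h]
  refine ⟨?_, hmono⟩
  intro j hj
  simp only [DesSet, Finset.mem_filter, Finset.mem_range] at hj
  obtain ⟨hjn, hdes⟩ := hj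
  rcases Nat.eq_zero_or_pos j with rfl | hj1
  · have h0 : centry γ 0 = (0, 0) := by simp [centry]
    have h1 : centry γ 1 = cval γ ⟨0, hn⟩ := by
      unfold centry
      rw [dif_pos (show 1 ≤ 1 ∧ 1 ≤ n from ⟨le_refl 1, hn⟩)]
    rw [h0, h1] at hdes
    have hc : 0 < (γ.color ⟨0, hn⟩ : ℕ) := by
      simp only [ARlt, cval] at hdes; omega
    have hcol : f.col (γ.perm ⟨0, hn⟩) ≠ 0 := by
      rw [← hγ.1 ⟨0, hn⟩]; omega
    have hv : f.val (γ.perm ⟨0, hn⟩) ≠ 0 := fun h => hcol (f.zero_col _ h)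
    have e0 : nthEntry n (fun i => f.val (γ.perm i)) 0 = 0 := by simp [nthEntry]
    have e1 : nthEntry n (fun i => f.val (γ.perm i)) 1 = f.val (γ.perm ⟨0, hn⟩) := by
      unfold nthEntry
      rw [dif_pos (show 1 ≤ 1 ∧ 1 ≤ n from ⟨le_refl 1, hn⟩)]
    rw [e0, e1]; omega
  · have hle : j ≤ n := le_of_lt hjn
    have hcj : 1 ≤ j ∧ j ≤ n := ⟨hj1, hle⟩
    have hcj1 : 1 ≤ j + 1 ∧ j + 1 ≤ n := ⟨by omega, hjn⟩
    have ea : centry γ j = cval γ ⟨j - 1, by omega⟩ := by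
      unfold centry; rw [dif_pos hcj]
    have eb : centry γ (j + 1) = cval γ ⟨j, hjn⟩ := by
      unfold centry; rw [dif_pos hcj1]; congr 1
    rw [ea, eb] at hdes
    have hlt : (⟨j - 1, by omega⟩ : Fin n) < ⟨j, hjn⟩ := by
      simp only [Fin.lt_def]; omega
    have e0 : nthEntry n (fun i => f.val (γ.perm i)) j
        = f.val (γ.perm ⟨j - 1, by omega⟩) := by
      unfold nthEntry; rw [dif_pos hcj]
    have e1 : nthEntry n (fun i => f.val (γ.perm i)) (j + 1)
        = f.val (γ.perm ⟨j, hjn⟩) := by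
      unfold nthEntry; rw [dif_pos hcj1]; congr 1
    rw [e0, e1]
    rcases hγ.2 ⟨j - 1, by omega⟩ ⟨j, hjn⟩ hlt with h' | h'
    · exact h'
    · exfalso
      have hA := h'.2
      simp only [ARlt, cval] at hA hdes
      omega
end
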